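/- Let E be a phase observable with phase matrix (c_{n,m}) and let A = {n ∈ ℕ : c_{n,m} = 0 for all m ≠ n}. Then every vector φ with ⟨n|φ⟩ = 0 whenever n ∉ A satisfies E(X)E(Y)φ = E(Y)E(X)φ for all Borel X, Y ⊆ [0,2π). Indeed, with P_A = ∑_{s∈A} |s⟩⟨s| one has E(X)P_A = (ℓ(X)/(2π)) P_A. -/

import Mathlib

/-! Since `c` is Hermitian with unit diagonal, for `m ∈ A` the column `m` of `c` vanishes off the
diagonal too, so `E(X) eₘ = (ℓ(X)/2π) eₘ`. By continuity `E(X)` acts as this scalar on every vector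
supported on `A`, and scalars commute. -/

open MeasureTheory Complex

/-- `phaseInt X n m = (1/2π) ∫_X e^{i(n-m)x} dx`. -/
noncomputable def phaseInt (X : Set ℝ) (n m : ℕ) : ℂ :=
  ((1 / (2 * Real.pi) : ℝ) : ℂ) *
    ∫ x in X, Complex.exp (Complex.I * ((n : ℂ) - (m : ℂ)) * (x : ℂ))

namespace HilbertBasis

variable {ι 𝕜 H : Type*} [RCLike 𝕜] [NormedAddCommGroup H] [InnerProductSpace 𝕜 H]

theorem eq_smul_of_inner_eq_ite [DecidableEq ι] (e : HilbertBasis ι 𝕜 H) {v : H} {m : ι} {s : 𝕜}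
    (h : ∀ n, inner 𝕜 (e n) v = if n = m then s else 0) : v = s • e m := by
  apply e.repr.injective
  ext n
  rw [e.repr_apply_apply, e.repr_apply_apply, h, inner_smul_right,
    orthonormal_iff_ite.mp e.orthonormal, mul_ite, mul_one, mul_zero]

theorem map_eq_smul_of_forall_mem (e : HilbertBasis ι 𝕜 H) (T : H →L[𝕜] H) {A : Set ι} {s : 𝕜}
    (hT : ∀ m ∈ A, T (e m) = s • e m) {φ : H} (hφ : ∀ n ∉ A, inner 𝕜 (e n) φ = 0) :
    T φ = s • φ := by
  have hTφ := T.hasSum (e.hasSum_repr φ)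
  have hterm : ∀ m, T (e.repr φ m • e m) = s • (e.repr φ m • e m) := by
    intro m
    by_cases hm : m ∈ A
    · rw [map_smul, hT m hm, smul_comm]
    · rw [e.repr_apply_apply, hφ m hm, zero_smul, map_zero, smul_zero]
  simp only [hterm] at hTφ
  exact hTφ.unique ((e.hasSum_repr φ).const_smul s)

end HilbertBasis

theorem phaseInt_self (X : Set ℝ) (n : ℕ) :
    phaseInt X n n = (((volume X).toReal / (2 * Real.pi) : ℝ) : ℂ) := by
  simp [phaseInt, Measure.real, div_eq_inv_mul]

theorem stmt11 {H : Type*} [NormedAddCommGroup H] [InnerProductSpace ℂ H]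
    (e : HilbertBasis ℕ ℂ H) (ξ : ℕ → H) (hξ : ∀ n, ‖ξ n‖ = 1)
    (c : ℕ → ℕ → ℂ) (hc : ∀ n m, c n m = (inner ℂ (ξ n) (ξ m) : ℂ))
    (E : Set ℝ → (H →L[ℂ] H))
    (hE : ∀ X : Set ℝ, MeasurableSet X → X ⊆ Set.Ico 0 (2 * Real.pi) → ∀ n m : ℕ,
      (inner ℂ (e n) (E X (e m)) : ℂ) = c n m * phaseInt X n m)
    (φ : H)
    (hφ : ∀ n : ℕ, n ∉ {n : ℕ | ∀ m : ℕ, m ≠ n → c n m = 0} → (inner ℂ (e n) φ : ℂ) = 0) :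
    (∀ X : Set ℝ, MeasurableSet X → X ⊆ Set.Ico 0 (2 * Real.pi) →
      E X φ = (((volume X).toReal / (2 * Real.pi) : ℝ) : ℂ) • φ) ∧
    (∀ X Y : Set ℝ, MeasurableSet X → MeasurableSet Y →
      X ⊆ Set.Ico 0 (2 * Real.pi) → Y ⊆ Set.Ico 0 (2 * Real.pi) →
      E X (E Y φ) = E Y (E X φ)) := by
  have hEφ : ∀ X : Set ℝ, MeasurableSet X → X ⊆ Set.Ico 0 (2 * Real.pi) →
      E X φ = (((volume X).toReal / (2 * Real.pi) : ℝ) : ℂ) • φ := by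
    intro X hX hXs
    refine e.map_eq_smul_of_forall_mem (E X) (fun m hm => ?_) hφ
    refine e.eq_smul_of_inner_eq_ite fun n => ?_
    rw [hE X hX hXs]
    split_ifs with hnm
    · rw [hnm, hc, inner_self_eq_one_of_norm_eq_one (hξ m), one_mul, phaseInt_self]
    · rw [hc, ← inner_conj_symm, ← hc, hm n hnm, map_zero, zero_mul]
  refine ⟨hEφ, fun X Y hX hY hXs hYs => ?_⟩
  rw [hEφ Y hY hYs, map_smul, hEφ X hX hXs, map_smul, hEφ Y hY hYs, smul_comm]
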